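/- arXiv:1110.2430 — 2 statements merged into one kernel-verified Lean document; each statement's English description precedes it below -/
import Mathlib

section
/- A transitive model of ZFC⁻ (with replacement but possibly not collection) that admits a definable global well-ordering of its universe satisfies the collection scheme. -/
universe u

/-- First-order formulas of set theory with `n` free variables (de Bruijn style),
with primitive bounded quantifiers. -/
inductive Fml : ℕ → Type
  | mem {n} (i j : Fin n) : Fml n
  | eq {n} (i j : Fin n) : Fml n
  | not {n} : Fml n → Fml n
  | and {n} : Fml n → Fml n → Fml n
  | ball {n} (i : Fin n) : Fml (n + 1) → Fml n
  | bex {n} (i : Fin n) : Fml (n + 1) → Fml n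
  | all {n} : Fml (n + 1) → Fml n
  | ex {n} : Fml (n + 1) → Fml n

/-- Δ₀ formulas: only bounded quantifiers. -/
inductive IsDelta0 : ∀ {n}, Fml n → Prop
  | mem {n} (i j : Fin n) : IsDelta0 (Fml.mem i j)
  | eq {n} (i j : Fin n) : IsDelta0 (Fml.eq i j)
  | not {n} {φ : Fml n} : IsDelta0 φ → IsDelta0 φ.not
  | and {n} {φ ψ : Fml n} : IsDelta0 φ → IsDelta0 ψ → IsDelta0 (φ.and ψ)
  | ball {n} (i : Fin n) {φ : Fml (n + 1)} : IsDelta0 φ → IsDelta0 (Fml.ball i φ)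
  | bex {n} (i : Fin n) {φ : Fml (n + 1)} : IsDelta0 φ → IsDelta0 (Fml.bex i φ)

/-- Σ₁ formulas: an unbounded existential quantifier applied to a Δ₀ formula. -/
def IsSigma1 {n} (φ : Fml n) : Prop := ∃ ψ : Fml (n + 1), IsDelta0 ψ ∧ φ = Fml.ex ψ

/-- Π₁ formulas: an unbounded universal quantifier applied to a Δ₀ formula. -/
def IsPi1 {n} (φ : Fml n) : Prop := ∃ ψ : Fml (n + 1), IsDelta0 ψ ∧ φ = Fml.all ψ

/-- Satisfaction in an abstract ∈-structure `(α, E)`. -/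
def Sat {α : Type u} (E : α → α → Prop) : ∀ {n}, Fml n → (Fin n → α) → Prop
  | _, .mem i j, v => E (v i) (v j)
  | _, .eq i j, v => v i = v j
  | _, .not φ, v => ¬ Sat E φ v
  | _, .and φ ψ, v => Sat E φ v ∧ Sat E ψ v
  | _, .ball i φ, v => ∀ a, E a (v i) → Sat E φ (Fin.snoc v a)
  | _, .bex i φ, v => ∃ a, E a (v i) ∧ Sat E φ (Fin.snoc v a)
  | _, .all φ, v => ∀ a, Sat E φ (Fin.snoc v a)
  | _, .ex φ, v => ∃ a, Sat E φ (Fin.snoc v a)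

/-- Satisfaction in a structure with a (possibly non-trivial) equality interpretation,
as used for (pre-quotient) ultrapowers. -/
def Sat2 {α : Type u} (Eq' E : α → α → Prop) : ∀ {n}, Fml n → (Fin n → α) → Prop
  | _, .mem i j, v => E (v i) (v j)
  | _, .eq i j, v => Eq' (v i) (v j)
  | _, .not φ, v => ¬ Sat2 Eq' E φ v
  | _, .and φ ψ, v => Sat2 Eq' E φ v ∧ Sat2 Eq' E ψ v
  | _, .ball i φ, v => ∀ a, E a (v i) → Sat2 Eq' E φ (Fin.snoc v a)
  | _, .bex i φ, v => ∃ a, E a (v i) ∧ Sat2 Eq' E φ (Fin.snoc v a)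
  | _, .all φ, v => ∀ a, Sat2 Eq' E φ (Fin.snoc v a)
  | _, .ex φ, v => ∃ a, Sat2 Eq' E φ (Fin.snoc v a)

/-- Satisfaction in a class `M` of ZF-sets, with quantifiers relativized to `M`. -/
def SatC (M : Set ZFSet.{u}) : ∀ {n}, Fml n → (Fin n → ZFSet.{u}) → Prop
  | _, .mem i j, v => v i ∈ v j
  | _, .eq i j, v => v i = v j
  | _, .not φ, v => ¬ SatC M φ v
  | _, .and φ ψ, v => SatC M φ v ∧ SatC M ψ v
  | _, .ball i φ, v => ∀ a ∈ M, a ∈ v i → SatC M φ (Fin.snoc v a)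
  | _, .bex i φ, v => ∃ a ∈ M, a ∈ v i ∧ SatC M φ (Fin.snoc v a)
  | _, .all φ, v => ∀ a ∈ M, SatC M φ (Fin.snoc v a)
  | _, .ex φ, v => ∃ a ∈ M, SatC M φ (Fin.snoc v a)

/-- A class of ZF-sets is transitive. -/
def TransCls (M : Set ZFSet.{u}) : Prop := ∀ x ∈ M, ∀ y : ZFSet, y ∈ x → y ∈ M

/- Semantic versions of the axioms of set theory for a class `M` of ZF-sets. -/

def AxExt (M : Set ZFSet.{u}) : Prop :=
  ∀ x ∈ M, ∀ y ∈ M, (∀ z : ZFSet, z ∈ x ↔ z ∈ y) → x = y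

def AxFound (M : Set ZFSet.{u}) : Prop :=
  ∀ x ∈ M, x ≠ ∅ → ∃ y : ZFSet, y ∈ x ∧ ∀ z : ZFSet, z ∈ x → z ∉ y

def AxPair (M : Set ZFSet.{u}) : Prop := ∀ x ∈ M, ∀ y ∈ M, ({x, y} : ZFSet) ∈ M

def AxUnion (M : Set ZFSet.{u}) : Prop := ∀ x ∈ M, ZFSet.sUnion x ∈ M

def AxInf (M : Set ZFSet.{u}) : Prop := ZFSet.omega ∈ M

def AxPow (M : Set ZFSet.{u}) : Prop := ∀ x ∈ M, ZFSet.powerset x ∈ M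

def AxSep (M : Set ZFSet.{u}) : Prop :=
  ∀ (n : ℕ) (φ : Fml (n + 1)) (v : Fin n → ZFSet), (∀ i, v i ∈ M) →
    ∀ x ∈ M, ZFSet.sep (fun y => SatC M φ (Fin.snoc v y)) x ∈ M

def AxRepl (M : Set ZFSet.{u}) : Prop :=
  ∀ (n : ℕ) (φ : Fml (n + 2)) (v : Fin n → ZFSet), (∀ i, v i ∈ M) →
    ∀ A ∈ M,
      (∀ a : ZFSet, a ∈ A →
        ∃! b : ZFSet, b ∈ M ∧ SatC M φ (Fin.snoc (Fin.snoc v a) b)) →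
      ∃ B ∈ M, ∀ b : ZFSet,
        b ∈ B ↔ ∃ a : ZFSet, a ∈ A ∧ SatC M φ (Fin.snoc (Fin.snoc v a) b)

def AxColl (M : Set ZFSet.{u}) : Prop :=
  ∀ (n : ℕ) (φ : Fml (n + 2)) (v : Fin n → ZFSet), (∀ i, v i ∈ M) →
    ∀ A ∈ M,
      (∀ a : ZFSet, a ∈ A → ∃ b ∈ M, SatC M φ (Fin.snoc (Fin.snoc v a) b)) →
      ∃ B ∈ M, ∀ a : ZFSet, a ∈ A →
        ∃ b : ZFSet, b ∈ B ∧ SatC M φ (Fin.snoc (Fin.snoc v a) b)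

/-- The well-ordering principle: every set carries a well-order (in `M`). -/
def AxWO (M : Set ZFSet.{u}) : Prop :=
  ∀ x ∈ M, ∃ r ∈ M,
    (∀ p ∈ r, ∃ a, a ∈ x ∧ ∃ b, b ∈ x ∧ p = ZFSet.pair a b) ∧
    IsWellOrder x.toSet.Elem (fun a b => ZFSet.pair a.1 b.1 ∈ r)

/-- ZFC minus power set, with replacement (the theory called `ZFC-` in the paper). -/
def ZFCminusRepl (M : Set ZFSet.{u}) : Prop :=
  AxExt M ∧ AxFound M ∧ AxPair M ∧ AxUnion M ∧ AxInf M ∧ AxSep M ∧ AxRepl M ∧ AxWO M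

/-- ZFC minus power set, with collection (the theory called `ZFC⁻` in the paper). -/
def ZFCminusColl (M : Set ZFSet.{u}) : Prop := ZFCminusRepl M ∧ AxColl M

/-- The (semantic) ZFC axioms for a transitive class. -/
def ZFCax (M : Set ZFSet.{u}) : Prop := ZFCminusRepl M ∧ AxPow M

/-- `f` is (coded as) a set-function with domain `d`. -/
def IsFnOn (d f : ZFSet.{u}) : Prop :=
  (∀ p ∈ f, ∃ a, a ∈ d ∧ ∃ b : ZFSet, p = ZFSet.pair a b) ∧
  ∀ a, a ∈ d → ∃! b : ZFSet, ZFSet.pair a b ∈ f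

/-- Application of a set-coded function. -/
noncomputable def app (f a : ZFSet.{u}) : ZFSet.{u} :=
  Classical.epsilon fun b => ZFSet.pair a b ∈ f

/-- The class of sets of hereditary size less than `κ`. -/
def Hclass (κ : Cardinal.{u + 1}) : Set ZFSet.{u} :=
  {x | ∃ t : ZFSet, t.IsTransitive ∧ x ⊆ t ∧ Cardinal.mk t.toSet < κ}

/-! Replacing each witness by its least witness in the definable global well-order turns the
collection instance into a replacement instance: if `ρ` well-orders `M`, then
`φ(a, b) ∧ ∀ b', ρ(b', b) → ¬ φ(a, b')` defines a function on `A`, and the image of `A` under it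
is a collecting set. -/

def extRen {m k : ℕ} (σ : Fin m → Fin k) : Fin (m + 1) → Fin (k + 1) :=
  Fin.snoc (fun i => (σ i).castSucc) (Fin.last k)

def Fml.ren : ∀ {m k : ℕ}, (Fin m → Fin k) → Fml m → Fml k
  | _, _, σ, .mem i j => .mem (σ i) (σ j)
  | _, _, σ, .eq i j => .eq (σ i) (σ j)
  | _, _, σ, .not φ => .not (φ.ren σ)
  | _, _, σ, .and φ ψ => .and (φ.ren σ) (ψ.ren σ)
  | _, _, σ, .ball i φ => .ball (σ i) (φ.ren (extRen σ))
  | _, _, σ, .bex i φ => .bex (σ i) (φ.ren (extRen σ))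
  | _, _, σ, .all φ => .all (φ.ren (extRen σ))
  | _, _, σ, .ex φ => .ex (φ.ren (extRen σ))

lemma snoc_comp_extRen {α : Type*} {m k : ℕ} (σ : Fin m → Fin k) (v : Fin k → α) (a : α) :
    Fin.snoc v a ∘ extRen σ = Fin.snoc (v ∘ σ) a := by
  funext i
  refine Fin.lastCases ?_ (fun j => ?_) i
  · simp [extRen]
  · simp [extRen, Function.comp]

lemma satC_ren (M : Set ZFSet.{u}) : ∀ {m k : ℕ} (φ : Fml m) (σ : Fin m → Fin k)
    (v : Fin k → ZFSet.{u}), SatC M (φ.ren σ) v ↔ SatC M φ (v ∘ σ)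
  | _, _, .mem _ _, _, _ => Iff.rfl
  | _, _, .eq _ _, _, _ => Iff.rfl
  | _, _, .not φ, σ, v => not_congr (satC_ren M φ σ v)
  | _, _, .and φ ψ, σ, v => and_congr (satC_ren M φ σ v) (satC_ren M ψ σ v)
  | _, _, .ball _ φ, σ, v => forall₃_congr fun a _ _ => by
      rw [satC_ren M φ (extRen σ), snoc_comp_extRen]
  | _, _, .bex _ φ, σ, v => exists_congr fun a => and_congr_right' <| and_congr_right' <| by
      rw [satC_ren M φ (extRen σ), snoc_comp_extRen]
  | _, _, .all φ, σ, v => forall₂_congr fun a _ => by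
      rw [satC_ren M φ (extRen σ), snoc_comp_extRen]
  | _, _, .ex φ, σ, v => exists_congr fun a => and_congr_right' <| by
      rw [satC_ren M φ (extRen σ), snoc_comp_extRen]

/-- `φ(w, b) ∧ ∀ b', ¬ (ρ(b', b) ∧ φ(w, b'))`; under the quantifier `b'` is the last variable. -/
def Fml.leastWitness {k : ℕ} (φ : Fml (k + 1)) (ρ : Fml 2) : Fml (k + 1) :=
  φ.and <| Fml.all <|
    ((ρ.ren ![Fin.last (k + 1), (Fin.last k).castSucc]).and (φ.ren (extRen Fin.castSucc))).not

lemma satC_leastWitness (M : Set ZFSet.{u}) {k : ℕ} (φ : Fml (k + 1)) (ρ : Fml 2)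
    (w : Fin k → ZFSet.{u}) (b : ZFSet.{u}) :
    SatC M (φ.leastWitness ρ) (Fin.snoc w b) ↔
      SatC M φ (Fin.snoc w b) ∧ ∀ b' ∈ M, SatC M ρ ![b', b] → ¬ SatC M φ (Fin.snoc w b') := by
  refine and_congr_right' <| forall₂_congr fun b' _ => ?_
  have hρ :
      Fin.snoc (Fin.snoc w b) b' ∘ ![Fin.last (k + 1), (Fin.last k).castSucc] = ![b', b] := by
    funext i
    fin_cases i <;> simp
  rw [← not_and]
  refine not_congr (and_congr ?_ ?_)
  · rw [satC_ren, hρ]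
  · rw [satC_ren, snoc_comp_extRen, Fin.snoc_comp_castSucc]

lemma existsUnique_least_of_isWellOrder {α : Type*} {M : Set α} {r : α → α → Prop}
    (hwo : IsWellOrder M (fun a b => r a b)) {P : α → Prop} (hP : ∃ b ∈ M, P b) :
    ∃! b, b ∈ M ∧ P b ∧ ∀ b' ∈ M, r b' b → ¬ P b' := by
  obtain ⟨b, hbM, hb⟩ := hP
  obtain ⟨m, hm, hmin⟩ := hwo.wf.has_min {x : M | P x} ⟨⟨b, hbM⟩, hb⟩
  refine ⟨m, ⟨m.2, hm, fun b' hb'M hlt hb' => hmin ⟨b', hb'M⟩ hb' hlt⟩, ?_⟩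
  rintro c ⟨hcM, hc, hcmin⟩
  rcases trichotomous_of (fun a b : M => r a b) ⟨c, hcM⟩ m with hlt | heq | hgt
  · exact (hmin ⟨c, hcM⟩ hc hlt).elim
  · exact congrArg Subtype.val heq
  · exact (hcmin m m.2 hgt hm).elim

lemma axColl_of_axRepl_of_isWellOrder {M : Set ZFSet.{u}} (hrepl : AxRepl M) {ρ : Fml 2}
    (hwo : IsWellOrder M.Elem (fun a b => SatC M ρ ![(a : ZFSet), (b : ZFSet)])) :
    AxColl M := by
  intro n φ v hv A hA hwit
  have hleast : ∀ a ∈ A,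
      ∃! b, b ∈ M ∧ SatC M (φ.leastWitness ρ) (Fin.snoc (Fin.snoc v a) b) := by
    intro a ha
    simpa only [satC_leastWitness] using
      existsUnique_least_of_isWellOrder (r := fun x y => SatC M ρ ![x, y]) hwo (hwit a ha)
  obtain ⟨B, hBM, hB⟩ := hrepl n (φ.leastWitness ρ) v hv A hA hleast
  refine ⟨B, hBM, fun a ha => ?_⟩
  obtain ⟨b, ⟨-, hb⟩, -⟩ := hleast a ha
  exact ⟨b, (hB b).2 ⟨a, ha, hb⟩, ((satC_leastWitness M φ ρ _ b).1 hb).1⟩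

theorem global_wellorder_implies_collection_general (M : Set ZFSet)
    (hzfc : ZFCminusRepl M) (ρ : Fml 2)
    (hwo : IsWellOrder M.Elem
      (fun a b => SatC M ρ ![(a : ZFSet), (b : ZFSet)])) :
    AxColl M :=
  axColl_of_axRepl_of_isWellOrder hzfc.2.2.2.2.2.2.1 hwo

/-- a transitive model of ZFC⁻ (replacement version) with a definable
global well-ordering satisfies the collection scheme. -/
theorem global_wellorder_implies_collection (M : Set ZFSet) (hM : TransCls M)
    (hzfc : ZFCminusRepl M) (ρ : Fml 2)
    (hwo : IsWellOrder M.Elem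
      (fun a b => SatC M ρ ![(a : ZFSet), (b : ZFSet)])) :
    AxColl M :=
  global_wellorder_implies_collection_general M hzfc ρ hwo
end

section
/- The Łoś theorem holds for Δ₀ formulas for ultrapowers of a transitive model M of ZFC⁻ (replacement version) by an M-ultrafilter μ on a cardinal κ in M, using functions in M: for any Δ₀ formula φ and functions f₁,...,f_k : κ → M in M, [f₁],...,[f_k] satisfy φ in the ultrapower if and only if {α < κ : M ⊨ φ(f₁(α),...,f_k(α))} ∈ μ. -/
universe u

/-- `κ` is a cardinal in the sense of `M`: an ordinal not surjected onto by any
smaller ordinal via a function in `M`. -/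
def IsCardinalIn (M : Set ZFSet.{u}) (κ : ZFSet.{u}) : Prop :=
  κ.IsOrdinal ∧ ∀ β : ZFSet, β ∈ κ →
    ¬∃ f, f ∈ M ∧ IsFnOn β f ∧ ∀ b : ZFSet, b ∈ κ → ∃ a : ZFSet, a ∈ β ∧ app f a = b

/-- `μ` is an `M`-ultrafilter on `κ`: an ultrafilter on the Boolean algebra
`P(κ) ∩ M`. -/
def MUltrafilter (M : Set ZFSet.{u}) (κ : ZFSet.{u}) (μ : Set ZFSet.{u}) : Prop :=
  (∀ A ∈ μ, A ∈ M ∧ A ⊆ κ) ∧ κ ∈ μ ∧ (∅ : ZFSet) ∉ μ ∧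
  (∀ A ∈ μ, ∀ B : ZFSet, B ∈ M → B ⊆ κ → A ⊆ B → B ∈ μ) ∧
  (∀ A ∈ μ, ∀ B ∈ μ, A ∩ B ∈ μ) ∧
  (∀ A : ZFSet, A ∈ M → A ⊆ κ → A ∈ μ ∨ κ \ A ∈ μ)

/-- The domain of the ultrapower: functions on `κ` belonging to `M`. -/
def UPt (M : Set ZFSet.{u}) (κ : ZFSet.{u}) : Type (u + 1) :=
  {f : ZFSet // f ∈ M ∧ IsFnOn κ f}

/-- μ-a.e. equality of functions. -/
def upEq (κ : ZFSet.{u}) (μ : Set ZFSet.{u}) {M : Set ZFSet.{u}}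
    (f g : UPt M κ) : Prop :=
  ZFSet.sep (fun α => app f.1 α = app g.1 α) κ ∈ μ

/-- μ-a.e. membership of functions. -/
def upMem (κ : ZFSet.{u}) (μ : Set ZFSet.{u}) {M : Set ZFSet.{u}}
    (f g : UPt M κ) : Prop :=
  ZFSet.sep (fun α => app f.1 α ∈ app g.1 α) κ ∈ μ

/-!
By induction on the Δ₀ formula. The truth sets `{α < κ | M ⊨ φ(f(α))}` are definable over `M`
from the functions `fᵢ` (replace `fᵢ(α)` by the unique `b` with `⟨α, b⟩ ∈ fᵢ`), so they lie in
`M` by Separation and the `M`-ultrafilter decides them: this gives negation, and conjunction is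
closure under intersection. For a bounded existential quantifier, a μ-large set of witnesses
has to be turned into one function in `M`: well-order `⋃⋃⋃ fᵢ` in `M` and, by Replacement,
collect the least witness below `fᵢ(α)` for each `α < κ`. Bounded universal quantifiers are
negated bounded existential ones.
-/

theorem Fin.snoc_comp_snoc_castSucc_comp {α : Sort*} {n m : ℕ} (v : Fin m → α) (a : α)
    (ρ : Fin n → Fin m) :
    Fin.snoc v a ∘ Fin.snoc (Fin.castSucc ∘ ρ) (Fin.last m) = Fin.snoc (v ∘ ρ) a := by
  rw [Fin.comp_snoc, Fin.snoc_last, ← Function.comp_assoc, Fin.snoc_comp_castSucc]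

theorem Fin.append_comp_natAdd {α : Sort*} {m n : ℕ} (u : Fin m → α) (v : Fin n → α) :
    Fin.append u v ∘ Fin.natAdd m = v :=
  funext (Fin.append_right u v)

theorem Fin.snoc_mem {α : Type*} {m : ℕ} {S : Set α} {v : Fin m → α} (hv : ∀ i, v i ∈ S)
    {a : α} (ha : a ∈ S) (i : Fin (m + 1)) : Fin.snoc (α := fun _ => α) v a i ∈ S := by
  induction i using Fin.lastCases <;> simp [ha, hv]

section SetFunctions

variable {M : Set ZFSet.{u}}

theorem TransCls.mem_of_pair_mem (hM : TransCls M) {f a b : ZFSet} (hf : f ∈ M)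
    (h : ZFSet.pair a b ∈ f) : a ∈ M ∧ b ∈ M := by
  have hab : ({a, b} : ZFSet) ∈ M := hM _ (hM _ hf _ h) _ (ZFSet.mem_pair.2 (Or.inr rfl))
  exact ⟨hM _ hab _ (ZFSet.mem_pair.2 (Or.inl rfl)), hM _ hab _ (ZFSet.mem_pair.2 (Or.inr rfl))⟩

theorem AxPair.pair_mem (hpair : AxPair M) {a b : ZFSet} (ha : a ∈ M) (hb : b ∈ M) :
    ZFSet.pair a b ∈ M :=
  hpair _ (ZFSet.pair_eq_singleton a ▸ hpair a ha a ha) _ (hpair a ha b hb)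

theorem pair_app_mem {f a : ZFSet} (h : ∃ b, ZFSet.pair a b ∈ f) :
    ZFSet.pair a (app f a) ∈ f :=
  Classical.epsilon_spec h

theorem app_eq_of_pair_mem {f a b : ZFSet} (h : ∃! b, ZFSet.pair a b ∈ f)
    (hb : ZFSet.pair a b ∈ f) : app f a = b :=
  h.unique (pair_app_mem h.exists) hb

theorem exists_pair_mem_and_iff {k : ℕ} {F : Fin k → ZFSet} {x : ZFSet}
    (hF : ∀ j, ∃! c, ZFSet.pair x c ∈ F j) {Q : (Fin k → ZFSet) → Prop} :
    (∃ b : Fin k → ZFSet, (∀ j, ZFSet.pair x (b j) ∈ F j) ∧ Q b) ↔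
      Q (fun j => app (F j) x) := by
  constructor
  · rintro ⟨b, hb, hQ⟩
    rwa [show (fun j => app (F j) x) = b from
      funext fun j => app_eq_of_pair_mem (hF j) (hb j)]
  · exact fun hQ => ⟨_, fun j => pair_app_mem (hF j).exists, hQ⟩

theorem mem_sUnion_sUnion_sUnion_of_pair_mem {f a b c : ZFSet} (h : ZFSet.pair a b ∈ f)
    (hc : c ∈ b) : c ∈ f.sUnion.sUnion.sUnion :=
  ZFSet.mem_sUnion_of_mem hc <| ZFSet.mem_sUnion_of_mem (ZFSet.mem_pair.2 (Or.inr rfl)) <|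
    ZFSet.mem_sUnion_of_mem (ZFSet.mem_pair.2 (Or.inr rfl)) h

end SetFunctions

def Fml.rename : ∀ {n m}, (Fin n → Fin m) → Fml n → Fml m
  | _, _, ρ, .mem i j => .mem (ρ i) (ρ j)
  | _, _, ρ, .eq i j => .eq (ρ i) (ρ j)
  | _, _, ρ, .not φ => .not (φ.rename ρ)
  | _, _, ρ, .and φ ψ => .and (φ.rename ρ) (ψ.rename ρ)
  | _, m, ρ, .ball i φ => .ball (ρ i) (φ.rename (Fin.snoc (Fin.castSucc ∘ ρ) (Fin.last m)))
  | _, m, ρ, .bex i φ => .bex (ρ i) (φ.rename (Fin.snoc (Fin.castSucc ∘ ρ) (Fin.last m)))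
  | _, m, ρ, .all φ => .all (φ.rename (Fin.snoc (Fin.castSucc ∘ ρ) (Fin.last m)))
  | _, m, ρ, .ex φ => .ex (φ.rename (Fin.snoc (Fin.castSucc ∘ ρ) (Fin.last m)))

section Definability

variable {M : Set ZFSet.{u}}

theorem satC_rename {n m : ℕ} (φ : Fml n) (ρ : Fin n → Fin m) (v : Fin m → ZFSet) :
    SatC M (φ.rename ρ) v ↔ SatC M φ (v ∘ ρ) := by
  induction φ generalizing m with
  | mem | eq => rfl
  | not φ ih => simp only [Fml.rename, SatC, ih]
  | and φ ψ ihφ ihψ => simp only [Fml.rename, SatC, ihφ, ihψ]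
  | ball i φ ih | bex i φ ih | all φ ih | ex φ ih =>
    simp only [Fml.rename, SatC, ih, Fin.snoc_comp_snoc_castSucc_comp, Function.comp_apply]

def DefinableIn (M : Set ZFSet.{u}) {m : ℕ} (P : (Fin m → ZFSet.{u}) → Prop) : Prop :=
  ∃ φ : Fml m, ∀ v : Fin m → ZFSet, (∀ i, v i ∈ M) → (SatC M φ v ↔ P v)

namespace DefinableIn

variable {m : ℕ} {P Q : (Fin m → ZFSet.{u}) → Prop}

theorem of_iff (hP : DefinableIn M P) (hPQ : ∀ v, (∀ i, v i ∈ M) → (P v ↔ Q v)) :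
    DefinableIn M Q :=
  let ⟨φ, hφ⟩ := hP
  ⟨φ, fun v hv => (hφ v hv).trans (hPQ v hv)⟩

theorem satC (φ : Fml m) : DefinableIn M (SatC M φ) := ⟨φ, fun _ _ => Iff.rfl⟩

theorem mem (i j : Fin m) : DefinableIn M (fun v => v i ∈ v j) := satC (.mem i j)

theorem eq (i j : Fin m) : DefinableIn M (fun v => v i = v j) := satC (.eq i j)

theorem not (hP : DefinableIn M P) : DefinableIn M (fun v => ¬ P v) :=
  let ⟨φ, hφ⟩ := hP
  ⟨φ.not, fun v hv => not_congr (hφ v hv)⟩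

theorem and (hP : DefinableIn M P) (hQ : DefinableIn M Q) :
    DefinableIn M (fun v => P v ∧ Q v) :=
  let ⟨φ, hφ⟩ := hP
  let ⟨ψ, hψ⟩ := hQ
  ⟨φ.and ψ, fun v hv => and_congr (hφ v hv) (hψ v hv)⟩

theorem or (hP : DefinableIn M P) (hQ : DefinableIn M Q) :
    DefinableIn M (fun v => P v ∨ Q v) :=
  (hP.not.and hQ.not).not.of_iff fun _ _ => by tauto

theorem imp (hP : DefinableIn M P) (hQ : DefinableIn M Q) :
    DefinableIn M (fun v => P v → Q v) :=
  (hP.and hQ.not).not.of_iff fun _ _ => by tauto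

theorem iff (hP : DefinableIn M P) (hQ : DefinableIn M Q) :
    DefinableIn M (fun v => P v ↔ Q v) :=
  ((hP.imp hQ).and (hQ.imp hP)).of_iff fun _ _ => iff_iff_implies_and_implies.symm

theorem exists_mem {P : (Fin (m + 1) → ZFSet.{u}) → Prop} (hP : DefinableIn M P) :
    DefinableIn M (fun v => ∃ a ∈ M, P (Fin.snoc v a)) :=
  let ⟨φ, hφ⟩ := hP
  ⟨φ.ex, fun _ hv => exists_congr fun _ =>
    and_congr_right fun ha => hφ _ (Fin.snoc_mem hv ha)⟩

theorem forall_mem {P : (Fin (m + 1) → ZFSet.{u}) → Prop} (hP : DefinableIn M P) :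
    DefinableIn M (fun v => ∀ a ∈ M, P (Fin.snoc v a)) :=
  let ⟨φ, hφ⟩ := hP
  ⟨φ.all, fun _ hv => forall_congr' fun _ =>
    forall_congr' fun ha => hφ _ (Fin.snoc_mem hv ha)⟩

theorem comp {k : ℕ} {P : (Fin k → ZFSet.{u}) → Prop} (hP : DefinableIn M P)
    (ρ : Fin k → Fin m) : DefinableIn M (fun v => P (v ∘ ρ)) :=
  let ⟨φ, hφ⟩ := hP
  ⟨φ.rename ρ, fun v hv => (satC_rename φ ρ v).trans (hφ _ fun i => hv (ρ i))⟩

theorem const_true : DefinableIn M (fun (_ : Fin m → ZFSet.{u}) => True) :=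
  (forall_mem (eq (Fin.last m) (Fin.last m))).of_iff fun _ _ => by simp

theorem forall_fin {k : ℕ} {P : Fin k → (Fin m → ZFSet.{u}) → Prop}
    (hP : ∀ j, DefinableIn M (P j)) : DefinableIn M (fun v => ∀ j, P j v) := by
  induction k with
  | zero => exact const_true.of_iff fun _ _ => by simp
  | succ k ih =>
    exact ((ih fun j => hP j.castSucc).and (hP (Fin.last k))).of_iff fun _ _ =>
      (Fin.forall_fin_succ' (P := fun j => P j _)).symm

theorem exists_tuple {k : ℕ} {P : (Fin (m + k) → ZFSet.{u}) → Prop} (hP : DefinableIn M P) :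
    DefinableIn M (fun v => ∃ w : Fin k → ZFSet, (∀ j, w j ∈ M) ∧ P (Fin.append v w)) := by
  induction k with
  | zero => exact hP.of_iff fun v _ => by simp [Fin.append_right_nil v _ rfl]
  | succ k ih =>
    refine (ih hP.exists_mem).of_iff fun v _ => ?_
    constructor
    · rintro ⟨w, hw, a, ha, h⟩
      exact ⟨Fin.snoc w a, Fin.snoc_mem hw ha, by rwa [Fin.append_snoc]⟩
    · rintro ⟨w, hw, h⟩
      refine ⟨Fin.init w, fun j => hw _, w (Fin.last k), hw _, ?_⟩
      rwa [← Fin.append_snoc, Fin.snoc_init_self]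

theorem comp_snoc_snoc {k : ℕ} {P : (Fin (k + 2) → ZFSet.{u}) → Prop} (hP : DefinableIn M P)
    (f : Fin k → Fin m) (x y : Fin m) :
    DefinableIn M (fun v => P (Fin.snoc (Fin.snoc (v ∘ f) (v x)) (v y))) :=
  (hP.comp (Fin.snoc (Fin.snoc f x) y)).of_iff fun v _ => by rw [Fin.comp_snoc, Fin.comp_snoc]

theorem eq_upair (hM : TransCls M) (i j k : Fin m) :
    DefinableIn M (fun v => v i = {v j, v k}) := by
  refine ((mem (Fin.last m) i.castSucc).iff
    ((eq (Fin.last m) j.castSucc).or (eq (Fin.last m) k.castSucc))).forall_mem.of_iff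
    fun v hv => ?_
  simp only [Fin.snoc_last, Fin.snoc_castSucc]
  constructor
  · intro h
    refine ZFSet.ext fun z => ⟨fun hz => ZFSet.mem_pair.2 ((h z (hM _ (hv i) _ hz)).1 hz),
      fun hz => ?_⟩
    have hzM : z ∈ M := by rcases ZFSet.mem_pair.1 hz with rfl | rfl <;> exact hv _
    exact (h z hzM).2 (ZFSet.mem_pair.1 hz)
  · rintro h z -
    rw [h, ZFSet.mem_pair]

theorem eq_pair (hM : TransCls M) (p a b : Fin m) :
    DefinableIn M (fun v => v p = ZFSet.pair (v a) (v b)) := by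
  refine ((eq_upair hM (Fin.last m).castSucc a.castSucc.castSucc a.castSucc.castSucc).and
    ((eq_upair hM (Fin.last (m + 1)) a.castSucc.castSucc b.castSucc.castSucc).and
      (eq_upair hM p.castSucc.castSucc (Fin.last m).castSucc (Fin.last (m + 1))))).exists_mem
    |>.exists_mem.of_iff fun v hv => ?_
  simp only [Fin.snoc_last, Fin.snoc_castSucc, ZFSet.pair_eq_singleton]
  constructor
  · rintro ⟨s, -, t, -, rfl, rfl, h⟩
    exact h
  · intro h
    have hs : ({v a} : ZFSet) ∈ M := hM _ (hv p) _ (h ▸ ZFSet.mem_pair.2 (Or.inl rfl))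
    have ht : ({v a, v b} : ZFSet) ∈ M := hM _ (hv p) _ (h ▸ ZFSet.mem_pair.2 (Or.inr rfl))
    exact ⟨_, hs, _, ht, rfl, rfl, h⟩

theorem pair_mem (hM : TransCls M) (a b f : Fin m) :
    DefinableIn M (fun v => ZFSet.pair (v a) (v b) ∈ v f) := by
  refine ((mem (Fin.last m) f.castSucc).and
    (eq_pair hM (Fin.last m) a.castSucc b.castSucc)).exists_mem.of_iff fun v hv => ?_
  simp only [Fin.snoc_last, Fin.snoc_castSucc]
  constructor
  · rintro ⟨p, -, hp, rfl⟩
    exact hp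
  · exact fun h => ⟨_, hM _ (hv f) _ h, h, rfl⟩

theorem exists_graph (hM : TransCls M) {k : ℕ} {P : (Fin (m + k) → ZFSet.{u}) → Prop}
    (hP : DefinableIn M P) (x : Fin m) (f : Fin k → Fin m) :
    DefinableIn M (fun v => ∃ b : Fin k → ZFSet,
      (∀ j, ZFSet.pair (v x) (b j) ∈ v (f j)) ∧ P (Fin.append v b)) := by
  refine ((forall_fin fun j => pair_mem hM (Fin.castAdd k x) (Fin.natAdd m j)
    (Fin.castAdd k (f j))).and hP).exists_tuple.of_iff fun v hv => ?_
  simp only [Fin.append_left, Fin.append_right]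
  constructor
  · rintro ⟨b, -, h⟩
    exact ⟨b, h⟩
  · rintro ⟨b, hb, h⟩
    exact ⟨b, fun j => (hM.mem_of_pair_mem (hv _) (hb j)).2, hb, h⟩

theorem sep_mem (hM : TransCls M) (hsep : AxSep M) {P : (Fin (m + 1) → ZFSet.{u}) → Prop}
    (hP : DefinableIn M P) {v : Fin m → ZFSet} (hv : ∀ i, v i ∈ M) {x : ZFSet} (hx : x ∈ M) :
    ZFSet.sep (fun y => P (Fin.snoc v y)) x ∈ M := by
  obtain ⟨φ, hφ⟩ := hP
  convert hsep m φ v hv x hx using 1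
  refine ZFSet.ext fun y => ?_
  simp only [ZFSet.mem_sep]
  exact and_congr_right fun hy => (hφ _ (Fin.snoc_mem hv (hM _ hx _ hy))).symm

theorem exists_image (hM : TransCls M) (hrepl : AxRepl M)
    {P : (Fin (m + 2) → ZFSet.{u}) → Prop} (hP : DefinableIn M P) {v : Fin m → ZFSet}
    (hv : ∀ i, v i ∈ M) {A : ZFSet} (hA : A ∈ M)
    (h : ∀ a ∈ A, ∃! b, b ∈ M ∧ P (Fin.snoc (Fin.snoc v a) b)) :
    ∃ B ∈ M, ∀ b, b ∈ B ↔ b ∈ M ∧ ∃ a ∈ A, P (Fin.snoc (Fin.snoc v a) b) := by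
  obtain ⟨φ, hφ⟩ := hP
  have hφ' : ∀ a ∈ A, ∀ b ∈ M,
      SatC M φ (Fin.snoc (Fin.snoc v a) b) ↔ P (Fin.snoc (Fin.snoc v a) b) :=
    fun a ha b hb => hφ _ (Fin.snoc_mem (Fin.snoc_mem hv (hM _ hA _ ha)) hb)
  obtain ⟨B, hBM, hB⟩ := hrepl m φ v hv A hA fun a ha => by
    obtain ⟨b, ⟨hbM, hb⟩, huniq⟩ := h a ha
    exact ⟨b, ⟨hbM, (hφ' a ha b hbM).2 hb⟩,
      fun c ⟨hcM, hc⟩ => huniq c ⟨hcM, (hφ' a ha c hcM).1 hc⟩⟩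
  refine ⟨B, hBM, fun b => ⟨fun hb => ?_, fun ⟨hbM, a, ha, hab⟩ => ?_⟩⟩
  · have hbM := hM _ hBM _ hb
    obtain ⟨a, ha, hab⟩ := (hB b).1 hb
    exact ⟨hbM, a, ha, (hφ' a ha b hbM).1 hab⟩
  · exact (hB b).2 ⟨a, ha, (hφ' a ha b hbM).2 hab⟩

end DefinableIn

end Definability

section Replacement

variable {M : Set ZFSet.{u}} {m : ℕ}

theorem exists_isFnOn_of_existsUnique (hM : TransCls M) (hpair : AxPair M) (hrepl : AxRepl M)
    {κ : ZFSet} (hκ : κ ∈ M) {P : (Fin (m + 2) → ZFSet.{u}) → Prop} (hP : DefinableIn M P)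
    {v : Fin m → ZFSet} (hv : ∀ i, v i ∈ M)
    (h : ∀ α ∈ κ, ∃! a, a ∈ M ∧ P (Fin.snoc (Fin.snoc v α) a)) :
    ∃ g ∈ M, IsFnOn κ g ∧ ∀ α ∈ κ, P (Fin.snoc (Fin.snoc v α) (app g α)) := by
  have hgraph := ((DefinableIn.eq_pair hM (Fin.last (m + 1)).castSucc
    (Fin.last m).castSucc.castSucc (Fin.last (m + 2))).and
      (hP.comp_snoc_snoc (fun i => i.castSucc.castSucc.castSucc)
        (Fin.last m).castSucc.castSucc (Fin.last (m + 2)))).exists_mem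
  obtain ⟨B, hBM, hB⟩ := hgraph.exists_image hM hrepl hv hκ fun α hα => by
    simp only [Fin.snoc_last, Fin.snoc_castSucc, Function.comp_def]
    obtain ⟨a, ⟨haM, ha⟩, huniq⟩ := h α hα
    refine ⟨_, ⟨hpair.pair_mem (hM _ hκ _ hα) haM, a, haM, rfl, ha⟩, ?_⟩
    rintro _ ⟨-, c, hcM, rfl, hc⟩
    rw [huniq c ⟨hcM, hc⟩]
  simp only [Fin.snoc_last, Fin.snoc_castSucc, Function.comp_def] at hB
  have hpair_mem_B : ∀ α ∈ κ, ∀ c,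
      ZFSet.pair α c ∈ B ↔ c ∈ M ∧ P (Fin.snoc (Fin.snoc v α) c) := by
    refine fun α hα c => ⟨fun hc => ?_, fun ⟨hcM, hc⟩ => ?_⟩
    · obtain ⟨-, α', -, c', hc'M, heq, hc'⟩ := (hB _).1 hc
      obtain ⟨rfl, rfl⟩ := ZFSet.pair_inj.1 heq
      exact ⟨hc'M, hc'⟩
    · exact (hB _).2 ⟨hpair.pair_mem (hM _ hκ _ hα) hcM, α, hα, c, hcM, rfl, hc⟩
  have hfn : IsFnOn κ B := by
    refine ⟨fun p hp => ?_, fun α hα => ?_⟩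
    · obtain ⟨-, α, hα, a, -, rfl, -⟩ := (hB p).1 hp
      exact ⟨α, hα, a, rfl⟩
    · obtain ⟨a, ha, huniq⟩ := h α hα
      exact ⟨a, (hpair_mem_B α hα a).2 ha, fun c hc => huniq c ((hpair_mem_B α hα c).1 hc)⟩
  exact ⟨B, hBM, hfn, fun α hα =>
    ((hpair_mem_B α hα _).1 (pair_app_mem (hfn.2 α hα).exists)).2⟩

end Replacement

theorem existsUnique_minimal_of_isWellOrder {W r : ZFSet}
    (hr : IsWellOrder W.toSet.Elem (fun a b => ZFSet.pair a.1 b.1 ∈ r)) {S : ZFSet → Prop}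
    (hSW : ∀ a, S a → a ∈ W) {a₀ : ZFSet} (ha₀ : S a₀) :
    ∃! a, S a ∧ ∀ w, S w → ZFSet.pair w a ∉ r := by
  obtain ⟨a, haS, hmin⟩ :=
    hr.toIsWellFounded.wf.has_min {x : W.toSet.Elem | S x.1} ⟨⟨a₀, hSW _ ha₀⟩, ha₀⟩
  refine ⟨a.1, ⟨haS, fun w hw => hmin ⟨w, hSW w hw⟩ hw⟩, fun b ⟨hbS, hbmin⟩ => ?_⟩
  rcases @trichotomous _ _ hr.toTrichotomous ⟨b, hSW b hbS⟩ a with h | h | h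
  · exact absurd h (hmin _ hbS)
  · exact congrArg Subtype.val h
  · exact absurd h (hbmin _ haS)

section Choice

variable {M : Set ZFSet.{u}} {m : ℕ}

theorem exists_isFnOn_uniformizing (hM : TransCls M) (hpair : AxPair M) (hrepl : AxRepl M)
    (hwo : AxWO M) {κ W : ZFSet} (hκ : κ ∈ M) (hW : W ∈ M)
    {R : (Fin (m + 2) → ZFSet.{u}) → Prop} (hR : DefinableIn M R) {v : Fin m → ZFSet}
    (hv : ∀ i, v i ∈ M) (hRW : ∀ α ∈ κ, ∀ a, R (Fin.snoc (Fin.snoc v α) a) → a ∈ W) :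
    ∃ g ∈ M, IsFnOn κ g ∧ ∀ α ∈ κ, ∀ a,
      R (Fin.snoc (Fin.snoc v α) a) → R (Fin.snoc (Fin.snoc v α) (app g α)) := by
  obtain ⟨r, hrM, -, hr⟩ := hwo W hW
  have hRa := hR.comp_snoc_snoc (fun i => i.castSucc.castSucc.castSucc)
    (Fin.last (m + 1)).castSucc (Fin.last (m + 2))
  have hRw := hR.comp_snoc_snoc (fun i => i.castSucc.castSucc.castSucc.castSucc)
    (Fin.last (m + 1)).castSucc.castSucc (Fin.last (m + 3))
  -- `a` is the `r`-least witness at `α`, or there is none and `a = α` (any default in `M` will do)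
  have hC := (hRa.and (hRw.imp (DefinableIn.pair_mem hM (Fin.last (m + 3))
      (Fin.last (m + 2)).castSucc (Fin.last m).castSucc.castSucc.castSucc).not).forall_mem).or
    (hRw.exists_mem.not.and (DefinableIn.eq (Fin.last (m + 2)) (Fin.last (m + 1)).castSucc))
  obtain ⟨g, hgM, hg, hgC⟩ :=
    exists_isFnOn_of_existsUnique hM hpair hrepl hκ hC (Fin.snoc_mem hv hrM) fun α hα => by
      simp only [Fin.snoc_last, Fin.snoc_castSucc, Function.comp_def]
      by_cases hex : ∃ a ∈ M, R (Fin.snoc (Fin.snoc v α) a)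
      · obtain ⟨a, haM, haR⟩ := hex
        obtain ⟨b, ⟨⟨hbM, hbR⟩, hbmin⟩, huniq⟩ := existsUnique_minimal_of_isWellOrder hr
          (S := fun a => a ∈ M ∧ R (Fin.snoc (Fin.snoc v α) a))
          (fun a h => hRW α hα a h.2) ⟨haM, haR⟩
        refine ⟨b, ⟨hbM, Or.inl ⟨hbR, fun w hwM hwR => hbmin w ⟨hwM, hwR⟩⟩⟩, ?_⟩
        rintro c ⟨hcM, ⟨hcR, hcmin⟩ | ⟨hno, -⟩⟩
        · exact huniq c ⟨⟨hcM, hcR⟩, fun w ⟨hwM, hwR⟩ => hcmin w hwM hwR⟩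
        · exact absurd ⟨a, haM, haR⟩ hno
      · refine ⟨α, ⟨hM _ hκ _ hα, Or.inr ⟨hex, rfl⟩⟩, ?_⟩
        rintro c ⟨hcM, ⟨hcR, -⟩ | ⟨-, rfl⟩⟩
        · exact absurd ⟨c, hcM, hcR⟩ hex
        · rfl
  simp only [Fin.snoc_last, Fin.snoc_castSucc, Function.comp_def] at hgC
  refine ⟨g, hgM, hg, fun α hα a ha => ?_⟩
  rcases hgC α hα with ⟨hgα, -⟩ | ⟨hno, -⟩
  · exact hgα
  · exact absurd ⟨a, hM _ hW _ (hRW α hα a ha), ha⟩ hno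

end Choice

namespace MUltrafilter

variable {M : Set ZFSet.{u}} {κ : ZFSet.{u}} {μ : Set ZFSet.{u}} {A B : ZFSet.{u}}

theorem mono (hμ : MUltrafilter M κ μ) (hA : A ∈ μ) (hBM : B ∈ M) (hBκ : B ⊆ κ)
    (hAB : A ⊆ B) : B ∈ μ :=
  hμ.2.2.2.1 A hA B hBM hBκ hAB

theorem inter_mem (hμ : MUltrafilter M κ μ) (hA : A ∈ μ) (hB : B ∈ μ) : A ∩ B ∈ μ :=
  hμ.2.2.2.2.1 A hA B hB

theorem inter_mem_iff (hμ : MUltrafilter M κ μ) (hAM : A ∈ M) (hAκ : A ⊆ κ) (hBM : B ∈ M)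
    (hBκ : B ⊆ κ) : A ∩ B ∈ μ ↔ A ∈ μ ∧ B ∈ μ :=
  ⟨fun h => ⟨hμ.mono h hAM hAκ fun _ hz => (ZFSet.mem_inter.1 hz).1,
    hμ.mono h hBM hBκ fun _ hz => (ZFSet.mem_inter.1 hz).2⟩, fun h => hμ.inter_mem h.1 h.2⟩

theorem sdiff_mem_iff (hμ : MUltrafilter M κ μ) (hAM : A ∈ M) (hAκ : A ⊆ κ) :
    κ \ A ∈ μ ↔ A ∉ μ := by
  refine ⟨fun hc hA => hμ.2.2.1 ?_, (hμ.2.2.2.2.2 A hAM hAκ).resolve_left⟩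
  convert hμ.inter_mem hA hc
  exact ZFSet.ext fun z => by
    simp only [ZFSet.notMem_empty, ZFSet.mem_inter, ZFSet.mem_sdiff]
    tauto

end MUltrafilter

section Los

variable {M : Set ZFSet.{u}} {κ : ZFSet.{u}} {μ : Set ZFSet.{u}} {n : ℕ}

theorem UPt.app_mem (hM : TransCls M) (f : UPt M κ) {α : ZFSet} (hα : α ∈ κ) :
    app f.1 α ∈ M :=
  (hM.mem_of_pair_mem f.2.1 (pair_app_mem (f.2.2.2 α hα).exists)).2

def truthSet (φ : Fml n) (fs : Fin n → UPt M κ) : ZFSet :=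
  ZFSet.sep (fun α => SatC M φ (fun i => app (fs i).1 α)) κ

theorem truthSet_subset (φ : Fml n) (fs : Fin n → UPt M κ) : truthSet φ fs ⊆ κ :=
  ZFSet.sep_subset

theorem truthSet_snoc (φ : Fml (n + 1)) (fs : Fin n → UPt M κ) (g : UPt M κ) :
    truthSet φ (Fin.snoc fs g) =
      ZFSet.sep (fun α => SatC M φ (Fin.snoc (fun j => app (fs j).1 α) (app g.1 α))) κ := by
  simp only [truthSet]
  congr 1
  funext α
  exact congrArg (SatC M φ) (Fin.comp_snoc (fun f : UPt M κ => app f.1 α) fs g)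

theorem truthSet_mem (hM : TransCls M) (hsep : AxSep M) (hκ : κ ∈ M) (φ : Fml n)
    (fs : Fin n → UPt M κ) : truthSet φ fs ∈ M := by
  have hP := ((DefinableIn.satC φ).comp (Fin.natAdd (n + 1))).exists_graph hM (Fin.last n)
    Fin.castSucc
  convert hP.sep_mem hM hsep (fun j => (fs j).2.1) hκ using 1
  refine ZFSet.ext fun α => ?_
  simp only [truthSet, ZFSet.mem_sep, Fin.snoc_last, Fin.snoc_castSucc]
  refine and_congr_right fun hα => ?_
  simp only [Fin.append_comp_natAdd]
  exact (exists_pair_mem_and_iff fun j => (fs j).2.2.2 α hα).symm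

theorem exists_upt_witness (hM : TransCls M) (hzfc : ZFCminusRepl M) (hκ : κ ∈ M)
    (i : Fin n) (φ : Fml (n + 1)) (fs : Fin n → UPt M κ) :
    ∃ g : UPt M κ, ∀ α ∈ κ, SatC M (Fml.bex i φ) (fun j => app (fs j).1 α) →
      app g.1 α ∈ app (fs i).1 α ∧
        SatC M φ (Fin.snoc (fun j => app (fs j).1 α) (app g.1 α)) := by
  obtain ⟨-, -, hpair, hunion, -, -, hrepl, hwo⟩ := hzfc
  obtain ⟨R, hR, hR_iff⟩ : ∃ R : (Fin (n + 2) → ZFSet) → Prop, DefinableIn M R ∧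
      ∀ α ∈ κ, ∀ a, R (Fin.snoc (Fin.snoc (fun j => (fs j).1) α) a) ↔
        a ∈ app (fs i).1 α ∧ SatC M φ (Fin.snoc (fun j => app (fs j).1 α) a) := by
    refine ⟨_, ((DefinableIn.satC ((Fml.mem (Fin.last n) i.castSucc).and φ)).comp
      (Fin.snoc (Fin.natAdd (n + 2)) (Fin.castAdd n (Fin.last (n + 1))))).exists_graph hM
        (Fin.last n).castSucc fun j => j.castSucc.castSucc, fun α hα a => ?_⟩
    simp only [Fin.comp_snoc, Fin.append_comp_natAdd, Fin.append_left, Fin.snoc_last,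
      Fin.snoc_castSucc]
    rw [exists_pair_mem_and_iff (fun j => (fs j).2.2.2 α hα)
      (Q := fun b => SatC M ((Fml.mem (Fin.last n) i.castSucc).and φ) (Fin.snoc b a))]
    simp only [SatC, Fin.snoc_last, Fin.snoc_castSucc]
  have hfs_i : (fs i).1.sUnion.sUnion.sUnion ∈ M := hunion _ (hunion _ (hunion _ (fs i).2.1))
  obtain ⟨g, hgM, hg, hgR⟩ := exists_isFnOn_uniformizing hM hpair hrepl hwo hκ hfs_i hR
    (fun j => (fs j).2.1) fun α hα a ha => mem_sUnion_sUnion_sUnion_of_pair_mem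
      (pair_app_mem ((fs i).2.2.2 α hα).exists) ((hR_iff α hα a).1 ha).1
  refine ⟨⟨g, hgM, hg⟩, fun α hα ⟨a, _, ha⟩ => ?_⟩
  exact (hR_iff α hα _).1 (hgR α hα a ((hR_iff α hα a).2 ha))

def LosProperty (M : Set ZFSet.{u}) (κ : ZFSet.{u}) (μ : Set ZFSet.{u}) (φ : Fml n) : Prop :=
  ∀ fs : Fin n → UPt M κ, Sat2 (upEq κ μ) (upMem κ μ) φ fs ↔ truthSet φ fs ∈ μ

theorem losProperty_not (hM : TransCls M) (hsep : AxSep M) (hκ : κ ∈ M)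
    (hμ : MUltrafilter M κ μ) {φ : Fml n} (h : LosProperty M κ μ φ) :
    LosProperty M κ μ φ.not := fun fs => by
  have hset : truthSet φ.not fs = κ \ truthSet φ fs := ZFSet.ext fun α => by
    simp only [truthSet, SatC, ZFSet.mem_sep, ZFSet.mem_sdiff]
    tauto
  rw [hset, hμ.sdiff_mem_iff (truthSet_mem hM hsep hκ φ fs) (truthSet_subset φ fs)]
  exact not_congr (h fs)

theorem losProperty_and (hM : TransCls M) (hsep : AxSep M) (hκ : κ ∈ M)
    (hμ : MUltrafilter M κ μ) {φ ψ : Fml n} (hφ : LosProperty M κ μ φ)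
    (hψ : LosProperty M κ μ ψ) : LosProperty M κ μ (φ.and ψ) := fun fs => by
  have hset : truthSet (φ.and ψ) fs = truthSet φ fs ∩ truthSet ψ fs := ZFSet.ext fun α => by
    simp only [truthSet, SatC, ZFSet.mem_sep, ZFSet.mem_inter]
    tauto
  rw [hset, hμ.inter_mem_iff (truthSet_mem hM hsep hκ φ fs) (truthSet_subset φ fs)
    (truthSet_mem hM hsep hκ ψ fs) (truthSet_subset ψ fs)]
  exact and_congr (hφ fs) (hψ fs)

theorem losProperty_bex (hM : TransCls M) (hzfc : ZFCminusRepl M) (hκ : κ ∈ M)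
    (hμ : MUltrafilter M κ μ) (i : Fin n) {φ : Fml (n + 1)} (h : LosProperty M κ μ φ) :
    LosProperty M κ μ (Fml.bex i φ) := by
  intro fs
  have hsep : AxSep M := hzfc.2.2.2.2.2.1
  -- `upMem g (fs i)` is the truth set of `v₀ ∈ v₁` at `![g, fs i]`
  have hmem_set (g : UPt M κ) : ZFSet.sep (fun α => app g.1 α ∈ app (fs i).1 α) κ ∈ M := by
    simpa [truthSet, SatC] using truthSet_mem hM hsep hκ (Fml.mem 0 1) ![g, fs i]
  constructor
  · rintro ⟨g, hg, hφg⟩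
    refine hμ.mono (hμ.inter_mem hg ((h _).1 hφg)) (truthSet_mem hM hsep hκ _ fs)
      (truthSet_subset _ fs) fun α hα => ?_
    rw [truthSet_snoc, ZFSet.mem_inter, ZFSet.mem_sep, ZFSet.mem_sep] at hα
    exact ZFSet.mem_sep.2 ⟨hα.1.1, app g.1 α, g.app_mem hM hα.1.1, hα.1.2, hα.2.2⟩
  · intro hS
    obtain ⟨g, hg⟩ := exists_upt_witness hM hzfc hκ i φ fs
    have hgS : ∀ α ∈ truthSet (Fml.bex i φ) fs, α ∈ κ ∧ _ :=
      fun α hα => ⟨(ZFSet.mem_sep.1 hα).1, hg α (ZFSet.mem_sep.1 hα).1 (ZFSet.mem_sep.1 hα).2⟩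
    refine ⟨g, hμ.mono hS (hmem_set g) ZFSet.sep_subset fun α hα => ?_,
      (h _).2 (hμ.mono hS (truthSet_mem hM hsep hκ φ _) (truthSet_subset _ _) fun α hα => ?_)⟩
    · exact ZFSet.mem_sep.2 ⟨(hgS α hα).1, (hgS α hα).2.1⟩
    · rw [truthSet_snoc]
      exact ZFSet.mem_sep.2 ⟨(hgS α hα).1, (hgS α hα).2.2⟩

theorem losProperty_ball (hM : TransCls M) (hzfc : ZFCminusRepl M) (hκ : κ ∈ M)
    (hμ : MUltrafilter M κ μ) (i : Fin n) {φ : Fml (n + 1)} (h : LosProperty M κ μ φ) :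
    LosProperty M κ μ (Fml.ball i φ) := by
  have hsep : AxSep M := hzfc.2.2.2.2.2.1
  intro fs
  have hset : truthSet (Fml.ball i φ) fs = truthSet (Fml.bex i φ.not).not fs :=
    ZFSet.ext fun α => by simp [truthSet, SatC]
  have hsat : Sat2 (upEq κ μ) (upMem κ μ) (Fml.ball i φ) fs ↔
      Sat2 (upEq κ μ) (upMem κ μ) (Fml.bex i φ.not).not fs := by
    simp [Sat2]
  rw [hsat, hset]
  exact losProperty_not hM hsep hκ hμ
    (losProperty_bex hM hzfc hκ hμ i (losProperty_not hM hsep hκ hμ h)) fs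

end Los

theorem los_delta0_general (M : Set ZFSet) (hM : TransCls M) (hzfc : ZFCminusRepl M)
    (κ : ZFSet) (hκ : κ ∈ M)
    (μ : Set ZFSet) (hμ : MUltrafilter M κ μ) :
    ∀ {n : ℕ} (φ : Fml n), IsDelta0 φ → ∀ fs : Fin n → UPt M κ,
      (Sat2 (upEq κ μ) (upMem κ μ) φ fs ↔
        ZFSet.sep (fun α => SatC M φ (fun i => app (fs i).1 α)) κ ∈ μ) := by
  have hsep : AxSep M := hzfc.2.2.2.2.2.1
  intro n φ hφ
  induction hφ with
  | mem | eq => exact fun _ => Iff.rfl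
  | not _ ih => exact losProperty_not hM hsep hκ hμ ih
  | and _ _ ihφ ihψ => exact losProperty_and hM hsep hκ hμ ihφ ihψ
  | ball i _ ih => exact losProperty_ball hM hzfc hκ hμ i ih
  | bex i _ ih => exact losProperty_bex hM hzfc hκ hμ i ih

/-- the Łoś theorem holds for Δ₀ formulas for ultrapowers of a
transitive model of ZFC⁻ (replacement version) by an M-ultrafilter. -/
theorem los_delta0 (M : Set ZFSet) (hM : TransCls M) (hzfc : ZFCminusRepl M)
    (κ : ZFSet) (hκ : κ ∈ M) (hcard : IsCardinalIn M κ)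
    (μ : Set ZFSet) (hμ : MUltrafilter M κ μ) :
    ∀ {n : ℕ} (φ : Fml n), IsDelta0 φ → ∀ fs : Fin n → UPt M κ,
      (Sat2 (upEq κ μ) (upMem κ μ) φ fs ↔
        ZFSet.sep (fun α => SatC M φ (fun i => app (fs i).1 α)) κ ∈ μ) :=
  los_delta0_general M hM hzfc κ hκ μ hμ
end
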